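/- Let A, B be nonnegative bounded operators on a Hilbert space H. Then B ≤ c·A for some scalar c > 0 if and only if there exists a nonnegative bounded operator C on H with B = √A C √A. -/

import Mathlib

/-!
If `B ≤ c • A`, write `B = R* R`; then `‖R x‖ ≤ √c ‖S x‖` with `S = √A`, so `R = T S` for a
bounded `T` (Douglas' lemma: `T` is well defined and bounded on the range of `S`, extends by
continuity to its closure and by zero on the orthogonal complement), and `B = S (T* T) S`.
Conversely `C ≤ ‖C‖ • 1` gives `S C S ≤ ‖C‖ • S S = ‖C‖ • A`.
-/

open ContinuousLinearMap
open scoped InnerProduct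

section Douglas

variable {𝕜 E F G : Type*} [RCLike 𝕜] [AddCommGroup E] [Module 𝕜 E]
  [NormedAddCommGroup F] [NormedSpace 𝕜 F] [CompleteSpace F]
  [NormedAddCommGroup G] [InnerProductSpace 𝕜 G] [CompleteSpace G]

theorem LinearMap.exists_continuousLinearMap_comp_eq_of_norm_le
    (R : E →ₗ[𝕜] F) (S : E →ₗ[𝕜] G) (C : ℝ) (h : ∀ x, ‖R x‖ ≤ C * ‖S x‖) :
    ∃ T : G →L[𝕜] F, ∀ x, T (S x) = R x := by
  set K := (LinearMap.range S).topologicalClosure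
  have hSK : ∀ x, S x ∈ K := fun x ↦
    Submodule.le_topologicalClosure _ (LinearMap.mem_range_self S x)
  set e : E →ₗ[𝕜] K := S.codRestrict K hSK
  have he : DenseRange e := by
    intro z
    rw [closure_subtype, ← Set.range_comp]
    have hz : (z : G) ∈ closure (LinearMap.range S : Set G) := z.2
    rwa [LinearMap.coe_range] at hz
  refine ⟨R.extendOfNorm e ∘L K.orthogonalProjectionOnto, fun x ↦ ?_⟩
  have hproj : K.orthogonalProjectionOnto (S x) = e x :=
    K.orthogonalProjectionOnto_mem_subspace_eq_self (e x)
  rw [ContinuousLinearMap.comp_apply, hproj, extendOfNorm_eq he ⟨C, h⟩]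

end Douglas

section Hilbert

variable {𝕜 E F G : Type*} [RCLike 𝕜]
  [NormedAddCommGroup E] [InnerProductSpace 𝕜 E] [CompleteSpace E]
  [NormedAddCommGroup F] [InnerProductSpace 𝕜 F] [CompleteSpace F]
  [NormedAddCommGroup G] [InnerProductSpace 𝕜 G] [CompleteSpace G]

theorem ContinuousLinearMap.norm_apply_le_of_adjoint_comp_self_le {R : E →L[𝕜] F}
    {S : E →L[𝕜] G} {c : ℝ} (hc : 0 ≤ c) (h : R† ∘L R ≤ (c : 𝕜) • (S† ∘L S)) (x : E) :
    ‖R x‖ ≤ √c * ‖S x‖ := by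
  have hsq : ‖R x‖ ^ 2 ≤ c * ‖S x‖ ^ 2 := by
    have := h.re_inner_nonneg_left x
    rw [apply_norm_sq_eq_inner_adjoint_left, apply_norm_sq_eq_inner_adjoint_left]
    simpa [inner_sub_left, inner_smul_left] using this
  refine le_of_pow_le_pow_left₀ two_ne_zero (by positivity) ?_
  rwa [mul_pow, Real.sq_sqrt hc]

end Hilbert

theorem le_smul_iff_sqrt_conj
    {H : Type*} [NormedAddCommGroup H] [InnerProductSpace ℂ H] [CompleteSpace H]
    (A B S : H →L[ℂ] H) (hA : A.IsPositive) (hB : B.IsPositive)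
    (hS : S.IsPositive) (hS2 : S ∘L S = A) :
    (∃ c : ℝ, 0 < c ∧ (c • A - B).IsPositive) ↔
      (∃ C : H →L[ℂ] H, C.IsPositive ∧ B = S ∘L C ∘L S) := by
  have hS_adj : S† = S := hS.isSelfAdjoint.adjoint_eq
  subst hS2
  constructor
  · rintro ⟨c, hc, hBA⟩
    obtain ⟨R, rfl⟩ :=
      CStarAlgebra.nonneg_iff_eq_star_mul_self.mp ((nonneg_iff_isPositive _).mpr hB)
    have hRS : R† ∘L R ≤ (c : ℂ) • (S† ∘L S) := by
      rw [hS_adj, Complex.coe_smul]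
      exact hBA
    obtain ⟨T, hT⟩ := (R : H →ₗ[ℂ] H).exists_continuousLinearMap_comp_eq_of_norm_le
      (S : H →ₗ[ℂ] H) √c (norm_apply_le_of_adjoint_comp_self_le hc.le hRS)
    have hTS : T ∘L S = R := ext hT
    refine ⟨T† ∘L T, isPositive_adjoint_comp_self T, ?_⟩
    rw [← hTS, star_eq_adjoint, adjoint_comp, hS_adj]
    rfl
  · rintro ⟨C, hC, rfl⟩
    refine ⟨‖C‖ + 1, by positivity, ?_⟩
    calc S ∘L C ∘L S = star S * C * S := by rw [star_eq_adjoint, hS_adj]; rfl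
      _ ≤ ‖C‖ • (star S * S) := CStarAlgebra.star_left_conjugate_le_norm_smul hC.isSelfAdjoint
      _ ≤ (‖C‖ + 1) • (S ∘L S) := by
        rw [star_eq_adjoint, hS_adj, add_smul, one_smul]
        exact le_add_of_nonneg_right ((nonneg_iff_isPositive _).mpr hA)
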